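/- arXiv:2002.10821 — 2 statements merged into one kernel-verified Lean document; each statement's English description precedes it below -/
import Mathlib

section
/- Let ρ^n ∈ ℝ^{2M} be nonnegative and suppose ρ̃ ∈ ℝ^{2M} satisfies ρ̃_i = ρ_i^n − (Δt/Δx)(F̃_{i+1/2} − F̃_{i−1/2}) with upwind fluxes F̃_{i+1/2} = ρ̃_i·max(u_{i+1/2},0) + ρ̃_{i+1}·min(u_{i+1/2},0) (and F̃_{1/2} = F̃_{2M+1/2} = 0) for some velocities u. Then ρ̃_i ≥ 0 for all i. -/
/-!
Let `χ` be the indicator of the set where `ρ̃` is negative. Multiplying the update by `χ` and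
summing, a summation by parts (using `F̃_{1/2} = F̃_{2M+1/2} = 0`) leaves only the fluxes across
the interfaces where `χ` jumps. Upwinding makes each of them carry mass into the negative set:
the flux entering it from a nonnegative cell is `≥ 0`, the flux leaving it into one is `≤ 0`.
Hence `∑ χ ρ̃ ≥ ∑ χ ρ ≥ 0`, while every `χ ρ̃` is `≤ 0`, so all of them vanish.
-/

open Finset

theorem sum_Icc_mul_sub_eq {R : Type*} [CommRing R] (g F : ℕ → R) (N : ℕ) :
    ∑ i ∈ Icc 1 N, g i * (F i - F (i - 1)) =
      g N * F N - g 0 * F 0 + ∑ i ∈ range N, F i * (g i - g (i + 1)) := by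
  induction N with
  | zero => simp
  | succ N ih =>
    rw [sum_Icc_succ_top (by omega), ih, sum_range_succ, Nat.add_sub_cancel]
    ring

theorem nonneg_of_conservative_update {N : ℕ} {c : ℝ} (hc : 0 ≤ c) {ρ ρt F : ℕ → ℝ}
    (hρ : ∀ i ∈ Icc 1 N, 0 ≤ ρ i) (hF0 : F 0 = 0) (hFN : F N = 0)
    (hin : ∀ i, 0 < i → i < N → 0 ≤ ρt i → ρt (i + 1) < 0 → 0 ≤ F i)
    (hout : ∀ i, 0 < i → i < N → ρt i < 0 → 0 ≤ ρt (i + 1) → F i ≤ 0)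
    (hupd : ∀ i ∈ Icc 1 N, ρt i = ρ i - c * (F i - F (i - 1))) :
    ∀ i ∈ Icc 1 N, 0 ≤ ρt i := by
  set χ : ℕ → ℝ := fun i => if ρt i < 0 then 1 else 0 with hχ
  have hχ_nonneg : ∀ i, 0 ≤ χ i := fun i => by positivity
  have hjump : ∀ i ∈ range N, F i * (χ i - χ (i + 1)) ≤ 0 := by
    intro i hi
    rcases i.eq_zero_or_pos with rfl | hi0
    · simp [hF0]
    have hiN := mem_range.1 hi
    by_cases hl : ρt i < 0 <;> by_cases hr : ρt (i + 1) < 0 <;> simp only [hχ, hl, hr, if_true,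
      if_false, sub_self, mul_zero, le_refl, sub_zero, mul_one, zero_sub, mul_neg, neg_nonpos]
    · exact hout i hi0 hiN hl (not_lt.1 hr)
    · exact hin i hi0 hiN (not_lt.1 hl) hr
  have hflux : ∑ i ∈ Icc 1 N, χ i * (F i - F (i - 1)) ≤ 0 := by
    rw [sum_Icc_mul_sub_eq, hF0, hFN, mul_zero, mul_zero, sub_zero, zero_add]
    exact sum_nonpos hjump
  have hmass : 0 ≤ ∑ i ∈ Icc 1 N, χ i * ρt i :=
    calc 0 ≤ ∑ i ∈ Icc 1 N, χ i * ρ i - c * ∑ i ∈ Icc 1 N, χ i * (F i - F (i - 1)) :=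
          sub_nonneg_of_le ((mul_nonpos_of_nonneg_of_nonpos hc hflux).trans
            (sum_nonneg fun i hi => mul_nonneg (hχ_nonneg i) (hρ i hi)))
      _ = ∑ i ∈ Icc 1 N, χ i * ρt i := by
          rw [mul_sum, ← sum_sub_distrib]
          exact sum_congr rfl fun i hi => by rw [hupd i hi]; ring
  have hterm : ∀ i ∈ Icc 1 N, χ i * ρt i ≤ 0 := fun i _ => by
    by_cases h : ρt i < 0 <;> simp [hχ, h]
    exact h.le
  intro i hi
  by_contra h
  have := (sum_eq_zero_iff_of_nonpos hterm).1 (le_antisymm (sum_nonpos hterm) hmass) i hi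
  simp only [hχ, not_le.1 h, if_true, one_mul] at this
  exact h this.ge

section UpwindFlux

variable {α : Type*} [Ring α] [LinearOrder α] [IsOrderedRing α]

theorem mul_max_add_mul_min_nonneg {a b : α} (u : α) (ha : 0 ≤ a) (hb : b ≤ 0) :
    0 ≤ a * max u 0 + b * min u 0 :=
  add_nonneg (mul_nonneg ha (le_max_right u 0))
    (mul_nonneg_of_nonpos_of_nonpos hb (min_le_right u 0))

theorem mul_max_add_mul_min_nonpos {a b : α} (u : α) (ha : a ≤ 0) (hb : 0 ≤ b) :
    a * max u 0 + b * min u 0 ≤ 0 :=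
  add_nonpos (mul_nonpos_of_nonpos_of_nonneg ha (le_max_right u 0))
    (mul_nonpos_of_nonneg_of_nonpos hb (min_le_right u 0))

end UpwindFlux

theorem upwind_nonnegativity_general
    (M : ℕ) (Δt Δx : ℝ) (hΔt : 0 < Δt) (hΔx : 0 < Δx)
    (ρ ρt : ℕ → ℝ) (u : ℕ → ℝ) (F : ℕ → ℝ)
    (hρ : ∀ i ∈ Finset.Icc 1 (2 * M), 0 ≤ ρ i)
    (hF0 : F 0 = 0) (hFM : F (2 * M) = 0)
    (hF : ∀ i, 1 ≤ i → i ≤ 2 * M - 1 →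
      F i = ρt i * max (u i) 0 + ρt (i + 1) * min (u i) 0)
    (hupd : ∀ i ∈ Finset.Icc 1 (2 * M),
      ρt i = ρ i - (Δt / Δx) * (F i - F (i - 1))) :
    ∀ i ∈ Finset.Icc 1 (2 * M), 0 ≤ ρt i :=
  nonneg_of_conservative_update (div_nonneg hΔt.le hΔx.le) hρ hF0 hFM
    (fun i hi0 hiN hl hr => hF i hi0 (by omega) ▸ mul_max_add_mul_min_nonneg (u i) hl hr.le)
    (fun i hi0 hiN hl hr => hF i hi0 (by omega) ▸ mul_max_add_mul_min_nonpos (u i) hl.le hr)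
    hupd

theorem upwind_nonnegativity
    (M : ℕ) (hM : 0 < M) (Δt Δx : ℝ) (hΔt : 0 < Δt) (hΔx : 0 < Δx)
    (ρ ρt : ℕ → ℝ) (u : ℕ → ℝ) (F : ℕ → ℝ)
    (hρ : ∀ i ∈ Finset.Icc 1 (2 * M), 0 ≤ ρ i)
    (hF0 : F 0 = 0) (hFM : F (2 * M) = 0)
    (hF : ∀ i, 1 ≤ i → i ≤ 2 * M - 1 →
      F i = ρt i * max (u i) 0 + ρt (i + 1) * min (u i) 0)
    (hupd : ∀ i ∈ Finset.Icc 1 (2 * M),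
      ρt i = ρ i - (Δt / Δx) * (F i - F (i - 1))) :
    ∀ i ∈ Finset.Icc 1 (2 * M), 0 ≤ ρt i :=
  upwind_nonnegativity_general M Δt Δx hΔt hΔx ρ ρt u F hρ hF0 hFM hF hupd
end

section
/- Let H be C² with lim_{ε→0+} ε·H''(ε) = 0, and define K_ε'(s+δ) via K_ε''(s+δ) = H''(s)/(s+ε). Then lim_{ε→0+} ε·|K_ε'(ε)| = 0, where K_ε'(ε) = K_ε'(1+δ) + ∫_{ε/2}^{1} H''(t)/(t+ε) dt is evaluated with δ = s = ε/2 and ε·K_ε'(1+δ) → 0. -/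
/-!
Write `g = H''` and split `∫_{ε/2}^1 g t / (t + ε) dt` at a fixed small `r`. Choosing `r` with
`|t g(t)| ≤ η` on `(0, r]` bounds the integrand there by `η / t²`, so `ε` times the integral over
`[ε/2, r]` is at most `2η`; the integral over `[r, 1]` stays bounded as `ε → 0⁺`, so `ε` times it
tends to `0`.
-/

open Set Filter MeasureTheory intervalIntegral Topology
open scoped Interval

lemma ContDiffOn.continuousOn_deriv_deriv {H : ℝ → ℝ} {s : Set ℝ} (hs : IsOpen s)
    (hH : ContDiffOn ℝ 2 H s) : ContinuousOn (deriv (deriv H)) s :=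
  (hH.deriv_of_isOpen hs (m := 1) (by norm_num)).continuousOn_deriv_of_isOpen hs le_rfl

lemma integral_inv_sq_le {a b : ℝ} (ha : 0 < a) (hab : a ≤ b) :
    ∫ t in a..b, (t ^ 2)⁻¹ ≤ a⁻¹ := by
  have hb : 0 < b := ha.trans_le hab
  have h0 : (0 : ℝ) ∉ [[a, b]] := by
    rw [uIcc_of_le hab]; exact fun h => ha.not_ge h.1
  have := integral_zpow (a := a) (b := b) (n := -2) (Or.inr ⟨by norm_num, h0⟩)
  simp only [zpow_neg, zpow_ofNat] at this
  rw [this]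
  norm_num
  linarith [inv_pos.2 hb]

lemma intervalIntegrable_div_add {g : ℝ → ℝ} (hg : ContinuousOn g (Ioi 0)) {a b ε : ℝ}
    (ha : 0 < a) (hb : 0 < b) (hε : 0 ≤ ε) :
    IntervalIntegrable (fun t => g t / (t + ε)) volume a b := by
  have hpos : ∀ t ∈ [[a, b]], 0 < t := fun t ht => (lt_min ha hb).trans_le ht.1
  refine ContinuousOn.intervalIntegrable ((hg.mono hpos).div (by fun_prop) ?_)
  intro t ht
  exact (add_pos_of_pos_of_nonneg (hpos t ht) hε).ne'

lemma abs_integral_div_add_le {g : ℝ → ℝ} {C a r ε : ℝ}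
    (ha : 0 < a) (har : a ≤ r) (hε : 0 ≤ ε) (hC : ∀ t ∈ Ioc 0 r, |t * g t| ≤ C) :
    |∫ t in a..r, g t / (t + ε)| ≤ C / a := by
  have hC0 : 0 ≤ C := (abs_nonneg _).trans (hC r ⟨ha.trans_le har, le_rfl⟩)
  have hpoint : ∀ t ∈ Ioc a r, ‖g t / (t + ε)‖ ≤ C * (t ^ 2)⁻¹ := by
    intro t ⟨hat, htr⟩
    have ht : 0 < t := ha.trans hat
    have h := hC t ⟨ht, htr⟩
    rw [abs_mul, abs_of_pos ht] at h
    have htε : 0 < t + ε := by linarith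
    rw [Real.norm_eq_abs, abs_div, abs_of_pos htε, div_le_iff₀ htε]
    calc |g t| = t * |g t| * (t ^ 2)⁻¹ * t := by field_simp
      _ ≤ C * (t ^ 2)⁻¹ * (t + ε) := by gcongr; linarith
  have hint : IntervalIntegrable (fun t => C * (t ^ 2)⁻¹) volume a r := by
    refine ContinuousOn.intervalIntegrable (continuousOn_const.mul ?_)
    refine ContinuousOn.inv₀ (by fun_prop) fun t ht => ?_
    rw [uIcc_of_le har] at ht
    exact (pow_pos (ha.trans_le ht.1) 2).ne'
  calc |∫ t in a..r, g t / (t + ε)|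
      ≤ ∫ t in a..r, C * (t ^ 2)⁻¹ :=
        norm_integral_le_of_norm_le har (Eventually.of_forall hpoint) hint
    _ = C * ∫ t in a..r, (t ^ 2)⁻¹ := integral_const_mul _ _
    _ ≤ C * a⁻¹ := by gcongr; exact integral_inv_sq_le ha har
    _ = C / a := rfl

lemma tendsto_mul_integral_div_add_of_pos {g : ℝ → ℝ} {r b : ℝ} (hr : 0 < r) (hrb : r ≤ b)
    (hg : ContinuousOn g (Icc r b)) :
    Tendsto (fun ε => ε * ∫ t in r..b, g t / (t + ε)) (𝓝[≥] 0) (𝓝 0) := by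
  obtain ⟨M, hM⟩ := isCompact_Icc.exists_bound_of_continuousOn hg
  have hbound : ∀ ε ≥ 0, |∫ t in r..b, g t / (t + ε)| ≤ M / r * |b - r| := by
    intro ε hε
    refine intervalIntegral.norm_integral_le_of_norm_le_const (f := fun t => g t / (t + ε)) fun t ht => ?_
    rw [uIoc_of_le hrb] at ht
    rw [norm_div, Real.norm_of_nonneg (show 0 ≤ t + ε by linarith [hr.trans ht.1])]
    exact div_le_div₀ ((norm_nonneg _).trans (hM t (Ioc_subset_Icc_self ht)))
      (hM t (Ioc_subset_Icc_self ht)) hr (by linarith [ht.1])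
  have hlim : Tendsto (fun ε : ℝ => ε * (M / r * |b - r|)) (𝓝[≥] 0) (𝓝 0) := by
    simpa using (tendsto_nhdsWithin_of_tendsto_nhds (continuous_id.mul_const
      (M / r * |b - r|)).continuousAt.tendsto : Tendsto _ (𝓝[≥] (0:ℝ)) _)
  refine squeeze_zero_norm' ?_ hlim
  filter_upwards [self_mem_nhdsWithin] with ε (hε : 0 ≤ ε)
  rw [norm_mul, Real.norm_of_nonneg hε]
  exact mul_le_mul_of_nonneg_left (hbound ε hε) hε

theorem tendsto_mul_integral_div_add {g : ℝ → ℝ} (hg : ContinuousOn g (Ioi 0))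
    (h0 : Tendsto (fun ε => ε * g ε) (𝓝[>] 0) (𝓝 0)) :
    Tendsto (fun ε => ε * ∫ t in (ε / 2)..1, g t / (t + ε)) (𝓝[>] 0) (𝓝 0) := by
  rw [Metric.tendsto_nhds] at h0 ⊢
  intro δ hδ
  obtain ⟨u, hu, hsmall⟩ := mem_nhdsGT_iff_exists_Ioc_subset.1 (h0 (δ / 4) (by positivity))
  set r := min u 1
  have hr : 0 < r := lt_min hu one_pos
  have hC : ∀ t ∈ Ioc 0 r, |t * g t| ≤ δ / 4 := fun t ht => by
    have h := hsmall ⟨ht.1, ht.2.trans (min_le_left _ _)⟩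
    rw [mem_ofPred_eq, Real.dist_eq, sub_zero] at h
    exact h.le
  have htail := (tendsto_mul_integral_div_add_of_pos hr (min_le_right _ _)
    (hg.mono fun t ht => hr.trans_le ht.1)).mono_left (nhdsWithin_mono _ Ioi_subset_Ici_self)
  filter_upwards [Metric.tendsto_nhds.1 htail (δ / 2) (by positivity), self_mem_nhdsWithin,
    Ioo_mem_nhdsGT (show (0 : ℝ) < 2 * r by positivity)] with ε htailε (hε : 0 < ε) hεr
  have hhead := abs_integral_div_add_le (half_pos hε) (by linarith [hεr.2]) hε.le hC
  rw [Real.dist_eq, sub_zero] at htailε ⊢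
  rw [← integral_add_adjacent_intervals (intervalIntegrable_div_add hg (half_pos hε) hr hε.le)
    (intervalIntegrable_div_add hg hr one_pos hε.le), mul_add]
  calc _ ≤ |ε * ∫ t in (ε / 2)..r, g t / (t + ε)| + |ε * ∫ t in r..1, g t / (t + ε)| :=
        abs_add_le _ _
    _ < δ / 2 + δ / 2 := by
        refine add_lt_add_of_le_of_lt ?_ htailε
        rw [abs_mul, abs_of_pos hε]
        calc ε * _ ≤ ε * (δ / 4 / (ε / 2)) := by gcongr
          _ = δ / 2 := by field_simp; ring
    _ = δ := add_halves δ

theorem regularised_flow_interchange_limit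
    (H : ℝ → ℝ) (hH : ContDiffOn ℝ 2 H (Set.Ici 0))
    (h0 : Filter.Tendsto (fun ε : ℝ => ε * deriv (deriv H) ε)
      (nhdsWithin 0 (Set.Ioi 0)) (nhds 0))
    (c : ℝ → ℝ)
    (hc : Filter.Tendsto (fun ε : ℝ => ε * c ε)
      (nhdsWithin 0 (Set.Ioi 0)) (nhds 0)) :
    Filter.Tendsto
      (fun ε : ℝ => ε * |c ε + ∫ t in (ε / 2)..1, deriv (deriv H) t / (t + ε)|)
      (nhdsWithin 0 (Set.Ioi 0)) (nhds 0) := by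
  have hint := tendsto_mul_integral_div_add
    ((hH.mono Ioi_subset_Ici_self).continuousOn_deriv_deriv isOpen_Ioi) h0
  have hsum := (hc.add hint).abs
  rw [add_zero, abs_zero] at hsum
  refine hsum.congr' ?_
  filter_upwards [self_mem_nhdsWithin] with ε (hε : 0 < ε)
  rw [← mul_add, abs_mul, abs_of_pos hε]
end
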